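/- For all integers q ≥ 1, D ≥ 0 and all α ∈ (0,1], the alternating sum Σ_{i=0}^{q-1} (-1)^i C(q, i+1) (1 - (i+1)(1-α)/q)^D satisfies α^D ≤ Σ_{i=0}^{q-1} (-1)^i C(q, i+1) (1 - (i+1)(1-α)/q)^D ≤ 1. -/
import Mathlib

open Finset

/-- For integers `q ≥ 1`, `D ≥ 0` and `α ∈ (0,1]`, the alternating sum
`Σ_{i=0}^{q-1} (-1)^i C(q,i+1) (1-(i+1)(1-α)/q)^D` lies between `α^D` and `1`. -/
theorem alternating_sum_bounds (q D : ℕ) (hq : 1 ≤ q) (α : ℝ) (hα : α ∈ Set.Ioc (0 : ℝ) 1) :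
    α ^ D ≤
      ∑ i ∈ range q, (-1 : ℝ) ^ i * (q.choose (i + 1)) * (1 - (i + 1) * (1 - α) / q) ^ D ∧
    ∑ i ∈ range q, (-1 : ℝ) ^ i * (q.choose (i + 1)) * (1 - (i + 1) * (1 - α) / q) ^ D ≤ 1 := by
  classical
  obtain ⟨hα0, hα1⟩ := hα
  have hq0 : (0 : ℝ) < q := by exact_mod_cast hq
  set β : ℝ := (1 - α) / q with hβ
  have hβ0 : 0 ≤ β := div_nonneg (by linarith) hq0.le
  set p : Fin (q + 1) → ℝ := fun x => if x = 0 then α else β with hp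
  have hpnn : ∀ x, 0 ≤ p x := by
    intro x; simp only [hp]; split <;> [exact hα0.le; exact hβ0]
  have hpsum : ∑ x, p x = 1 := by
    rw [Fin.sum_univ_succ]
    have h1 : ∀ i : Fin q, p i.succ = β := by
      intro i; simp [hp, Fin.succ_ne_zero]
    rw [Finset.sum_congr rfl (fun i _ => h1 i)]
    simp only [hp, if_pos rfl, Finset.sum_const, Finset.card_univ, Fintype.card_fin,
      nsmul_eq_mul]
    rw [hβ, mul_div_cancel₀ _ hq0.ne']
    ring
  -- the colour set
  set C : Finset (Fin (q + 1)) := {(0 : Fin (q + 1))}ᶜ with hC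
  have hCcard : C.card = q := by
    rw [hC, Finset.card_compl, Finset.card_singleton, Fintype.card_fin]
    omega
  have hC0 : (0 : Fin (q + 1)) ∉ C := by simp [hC]
  -- key sum over functions for a set of avoided colours
  have key : ∀ T : Finset (Fin (q + 1)), (0 : Fin (q + 1)) ∉ T →
      ∑ f : Fin D → Fin (q + 1), ∏ i, (if f i ∈ T then (0 : ℝ) else p (f i))
        = (1 - T.card * β) ^ D := by
    intro T hT
    have h1 : ∑ x, (if x ∈ T then (0 : ℝ) else p x) = 1 - T.card * β := by
      have : ∀ x, (if x ∈ T then (0 : ℝ) else p x)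
          = p x - (if x ∈ T then β else 0) := by
        intro x
        by_cases hx : x ∈ T
        · have hx0 : x ≠ 0 := fun h => hT (h ▸ hx)
          simp [hx, hp, hx0]
        · simp [hx]
      rw [Finset.sum_congr rfl fun x _ => this x, Finset.sum_sub_distrib, hpsum,
        Finset.sum_ite_mem, Finset.univ_inter, Finset.sum_const, nsmul_eq_mul]
    rw [← h1, Fintype.sum_pow]
  -- the indicator that f misses colour c
  set h : (Fin D → Fin (q + 1)) → Fin (q + 1) → ℝ :=
    fun f c => ∏ i, (if f i = c then (0 : ℝ) else 1) with hh
  have hh01 : ∀ f c, h f c = 0 ∨ h f c = 1 := by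
    intro f c
    by_cases hex : ∃ i, f i = c
    · obtain ⟨i, hi⟩ := hex
      left
      exact Finset.prod_eq_zero (Finset.mem_univ i) (by simp [hi])
    · right
      push_neg at hex
      exact Finset.prod_eq_one fun i _ => by simp [hex i]
  have hprod_eq : ∀ (f : Fin D → Fin (q + 1)) (t : Finset (Fin (q + 1))),
      (∏ i, p (f i)) * ∏ c ∈ t, h f c
        = ∏ i, (if f i ∈ t then (0 : ℝ) else p (f i)) := by
    intro f t
    simp only [hh]
    rw [Finset.prod_comm, ← Finset.prod_mul_distrib]
    refine Finset.prod_congr rfl fun i _ => ?_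
    by_cases hi : f i ∈ t
    · rw [if_pos hi, Finset.prod_eq_zero hi (by simp), mul_zero]
    · rw [if_neg hi, Finset.prod_eq_one fun c hc => ?_, mul_one]
      have : f i ≠ c := fun h => hi (h ▸ hc)
      simp [this]
  -- main identity
  have main : ∑ i ∈ range q, (-1 : ℝ) ^ i * (q.choose (i + 1)) * (1 - (i + 1) * (1 - α) / q) ^ D
      = ∑ f : Fin D → Fin (q + 1), (∏ i, p (f i)) * (1 - ∏ c ∈ C, (1 - h f c)) := by
    have expand : ∀ f : Fin D → Fin (q + 1),
        (∏ i, p (f i)) * (1 - ∏ c ∈ C, (1 - h f c))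
          = (∏ i, p (f i)) - ∑ t ∈ C.powerset,
              (-1 : ℝ) ^ t.card * ∏ i, (if f i ∈ t then (0 : ℝ) else p (f i)) := by
      intro f
      have : ∏ c ∈ C, (1 - h f c) = ∏ c ∈ C, (-h f c + 1) := by
        refine Finset.prod_congr rfl fun c _ => by ring
      rw [mul_sub, mul_one, this, Finset.prod_add, Finset.mul_sum]
      congr 1
      refine Finset.sum_congr rfl fun t ht => ?_
      rw [Finset.prod_const, one_pow, mul_one]
      have hneg : ∏ c ∈ t, -h f c = (-1 : ℝ) ^ t.card * ∏ c ∈ t, h f c := by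
        rw [← Finset.prod_const (-1 : ℝ), ← Finset.prod_mul_distrib]
        exact Finset.prod_congr rfl fun c _ => by ring
      rw [hneg, ← hprod_eq f t]
      ring
    rw [Finset.sum_congr rfl fun f _ => expand f, Finset.sum_sub_distrib]
    have hw1 : ∑ f : Fin D → Fin (q + 1), ∏ i, p (f i) = 1 := by
      rw [← Fintype.sum_pow, hpsum, one_pow]
    rw [hw1, Finset.sum_comm]
    have hterm : ∀ t ∈ C.powerset,
        ∑ f : Fin D → Fin (q + 1),
          (-1 : ℝ) ^ t.card * ∏ i, (if f i ∈ t then (0 : ℝ) else p (f i))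
          = (-1 : ℝ) ^ t.card * (1 - t.card * β) ^ D := by
      intro t ht
      rw [← Finset.mul_sum, key t fun h0 => hC0 (Finset.mem_powerset.1 ht h0)]
    rw [Finset.sum_congr rfl hterm]
    have hgroup : ∑ t ∈ C.powerset, (-1 : ℝ) ^ t.card * (1 - t.card * β) ^ D
        = ∑ j ∈ range (q + 1), (q.choose j : ℝ) * ((-1 : ℝ) ^ j * (1 - j * β) ^ D) := by
      rw [Finset.sum_powerset, hCcard]
      refine Finset.sum_congr rfl fun j hj => ?_
      have : ∀ t ∈ Finset.powersetCard j C,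
          (-1 : ℝ) ^ t.card * (1 - t.card * β) ^ D
            = (-1 : ℝ) ^ j * (1 - j * β) ^ D := by
        intro t ht
        rw [(Finset.mem_powersetCard.1 ht).2]
      rw [Finset.sum_congr rfl this, Finset.sum_const, Finset.card_powersetCard, hCcard,
        nsmul_eq_mul]
    rw [hgroup, Finset.sum_range_succ']
    simp only [Nat.choose_zero_right, Nat.cast_one, pow_zero, Nat.cast_zero, zero_mul,
      sub_zero, one_pow, one_mul, mul_one]
    rw [show ∀ X : ℝ, (1 : ℝ) - (X + 1) = -X from fun X => by ring,
      ← Finset.sum_neg_distrib]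
    refine Finset.sum_congr rfl fun i _ => ?_
    have : (1 : ℝ) - (i + 1 : ℕ) * β = 1 - (i + 1) * (1 - α) / q := by
      push_cast [hβ]; ring
    rw [this]
    push_cast
    ring
  -- bounds on the factor g f
  have hg01 : ∀ f : Fin D → Fin (q + 1),
      0 ≤ 1 - ∏ c ∈ C, (1 - h f c) ∧ (1 - ∏ c ∈ C, (1 - h f c)) ≤ 1 := by
    intro f
    have h1 : ∀ c ∈ C, (0 : ℝ) ≤ 1 - h f c := by
      intro c _; rcases hh01 f c with h | h <;> simp [h]
    have h2 : ∀ c ∈ C, (1 : ℝ) - h f c ≤ 1 := by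
      intro c _; rcases hh01 f c with h | h <;> simp [h]
    constructor
    · have := Finset.prod_le_one h1 h2
      linarith
    · have := Finset.prod_nonneg h1
      linarith
  have hwnn : ∀ f : Fin D → Fin (q + 1), 0 ≤ ∏ i, p (f i) :=
    fun f => Finset.prod_nonneg fun i _ => hpnn _
  constructor
  · -- lower bound: term at the constant-0 function
    rw [main]
    have hf0 : (∏ i : Fin D, p ((fun _ => (0 : Fin (q + 1))) i)) *
        (1 - ∏ c ∈ C, (1 - h (fun _ => 0) c)) = α ^ D := by
      have hCne : C.Nonempty := by
        refine ⟨⟨1, by omega⟩, ?_⟩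
        simp [hC, Fin.ext_iff]
      obtain ⟨c0, hc0⟩ := hCne
      have hzero : ∏ c ∈ C, (1 - h (fun _ => (0 : Fin (q + 1))) c) = 0 := by
        refine Finset.prod_eq_zero hc0 ?_
        have hc0ne : c0 ≠ 0 := by
          intro h; rw [h] at hc0; exact hC0 hc0
        have : h (fun _ => (0 : Fin (q + 1))) c0 = 1 := by
          rw [hh]
          exact Finset.prod_eq_one fun i _ => by simp [hc0ne.symm]
        rw [this]; ring
      rw [hzero]
      simp only [hp, if_pos rfl]
      rw [Finset.prod_const, Finset.card_univ, Fintype.card_fin]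
      ring
    calc α ^ D = _ := hf0.symm
      _ ≤ _ := Finset.single_le_sum
          (f := fun f : Fin D → Fin (q + 1) =>
            (∏ i, p (f i)) * (1 - ∏ c ∈ C, (1 - h f c)))
          (fun f _ => mul_nonneg (hwnn f) (hg01 f).1) (Finset.mem_univ _)
  · rw [main]
    calc ∑ f : Fin D → Fin (q + 1), (∏ i, p (f i)) * (1 - ∏ c ∈ C, (1 - h f c))
        ≤ ∑ f : Fin D → Fin (q + 1), ∏ i, p (f i) := by
          refine Finset.sum_le_sum fun f _ => ?_
          exact mul_le_of_le_one_right (hwnn f) (hg01 f).2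
      _ = 1 := by rw [← Fintype.sum_pow, hpsum, one_pow]
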